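/- arXiv:2208.02071 — 5 statements merged into one kernel-verified Lean document; each statement's English description precedes it below -/
import Mathlib

section
/- Let k ≥ 3 and n ≥ 2k+1, and define the antichain A_n = {F_1, ..., F_{⌊n/2⌋−k+1}} in F_{2k}^{[1,n]} where F_i = [i, i+1] ∪ [n−2k+4−i, n−i+1]. Then A_n is indeed an antichain with respect to the componentwise partial order ≤_p on 2k-element subsets of [1,n] (each set written in increasing order). -/
/-! `F_i` has least element `i` and greatest element `n - i + 1`, and `≤ₚ` compares least
elements and greatest elements, so `F_i ≤ₚ F_j` forces both `i ≤ j` and `j ≤ i`. -/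

open Finset

/-- `GaleEven k m n F` means `F` is a `2k`-subset of `[m,n]` of the form
`{i₁, i₁+1, i₂, i₂+1, …, i_k, i_k+1}` with `i_{j+1} ≥ i_j + 2` for all `j`,
`m ≤ i₁`, and `i_k + 1 ≤ n` (a member of the family `F_{2k}^{[m,n]}`). -/
def GaleEven (k m n : ℕ) (F : Finset ℕ) : Prop :=
  ∃ f : Fin k → ℕ,
    (∀ j j' : Fin k, j < j' → f j + 2 ≤ f j') ∧
    (∀ j : Fin k, m ≤ f j ∧ f j + 1 ≤ n) ∧
    F = Finset.univ.biUnion fun j : Fin k => {f j, f j + 1}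

/-- The componentwise partial order `≤ₚ`: `F ≤ₚ G` iff, listing both sets in
increasing order, each element of `F` is at most the corresponding element
of `G`. -/
def lep (F G : Finset ℕ) : Prop :=
  List.Forall₂ (· ≤ ·) (F.sort (· ≤ ·)) (G.sort (· ≤ ·))

/-- The member `F_i = [i, i+1] ∪ [n−2k+4−i, n−i+1]` of the antichain `A_n`. -/
def Fset (k n i : ℕ) : Finset ℕ :=
  Finset.Icc i (i + 1) ∪ Finset.Icc (n - 2 * k + 4 - i) (n - i + 1)

/-- The antichain `A_n = {F_1, …, F_{⌊n/2⌋−k+1}}` (as a predicate). -/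
def Aset (k n : ℕ) : Finset ℕ → Prop :=
  fun F => ∃ j, 1 ≤ j ∧ j ≤ n / 2 - k + 1 ∧ F = Fset k n j

/-- The shifted antichain `A_n − 1_{2k}` : the element coming from `F_j` is
`[j−1, j] ∪ [n−2k+3−j, n−j]`, defined for `j > 1`. -/
def AsetMinus (k n : ℕ) : Finset ℕ → Prop :=
  fun F => ∃ j, 2 ≤ j ∧ j ≤ n / 2 - k + 1 ∧
    F = Finset.Icc (j - 1) j ∪ Finset.Icc (n - 2 * k + 3 - j) (n - j)

/-- Membership in the order ideal of `F_{2k}^{[1,n]}` generated by a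
collection `S`. -/
def InIdeal (k n : ℕ) (S : Finset ℕ → Prop) (F : Finset ℕ) : Prop :=
  GaleEven k 1 n F ∧ ∃ G : Finset ℕ, S G ∧ lep F G

/-- `F` is a facet of the relative squeezed ball `B_{A_n}`: it lies in the order
ideal generated by `A_n` but not in the one generated by `A_n − 1_{2k}`. -/
def IsBAFacet (k n : ℕ) (F : Finset ℕ) : Prop :=
  InIdeal k n (Aset k n) F ∧ ¬ InIdeal k n (AsetMinus k n) F


namespace lep

variable {F G : Finset ℕ}

theorem min'_le_min' (h : lep F G) (hF : F.Nonempty) (hG : G.Nonempty) :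
    F.min' hF ≤ G.min' hG := by
  rw [min'_eq_sorted_zero, min'_eq_sorted_zero]
  exact h.get _ _

theorem max'_le_max' (h : lep F G) (hF : F.Nonempty) (hG : G.Nonempty) :
    F.max' hF ≤ G.max' hG := by
  rw [max'_eq_sorted_last, max'_eq_sorted_last]
  simp only [h.length_eq]
  exact h.get _ _

end lep

theorem Fset_nonempty (k n i : ℕ) : (Fset k n i).Nonempty :=
  ⟨i, by simp [Fset]⟩

theorem Fset_min' {k n i : ℕ} (hn : 2 * k ≤ n) (hi : i ≤ n / 2 - k + 1) :
    (Fset k n i).min' (Fset_nonempty k n i) = i := by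
  refine le_antisymm (min'_le _ _ (by simp [Fset])) (le_min' _ _ _ fun b hb => ?_)
  simp only [Fset, mem_union, mem_Icc] at hb
  omega

theorem Fset_max' {k n i : ℕ} (hk : 2 ≤ k) (hn : 2 * k ≤ n) (hi : i ≤ n / 2 - k + 1) :
    (Fset k n i).max' (Fset_nonempty k n i) = n - i + 1 := by
  refine le_antisymm (max'_le _ _ _ fun b hb => ?_)
    (le_max' _ _ (by simp only [Fset, mem_union, mem_Icc]; omega))
  simp only [Fset, mem_union, mem_Icc] at hb
  omega

theorem eq_of_lep_Fset {k n i j : ℕ} (hk : 2 ≤ k) (hn : 2 * k ≤ n) (hi : i ≤ n / 2 - k + 1)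
    (hj : j ≤ n / 2 - k + 1) (h : lep (Fset k n i) (Fset k n j)) : i = j := by
  have hmin := h.min'_le_min' (Fset_nonempty k n i) (Fset_nonempty k n j)
  have hmax := h.max'_le_max' (Fset_nonempty k n i) (Fset_nonempty k n j)
  rw [Fset_min' hn hi, Fset_min' hn hj] at hmin
  rw [Fset_max' hk hn hi, Fset_max' hk hn hj] at hmax
  omega

/-- for `k ≥ 3` and `n ≥ 2k+1`, the collection
`A_n = {F_1, …, F_{⌊n/2⌋−k+1}}` with `F_i = [i,i+1] ∪ [n−2k+4−i, n−i+1]` is an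
antichain for the componentwise order `≤ₚ`. -/
theorem stmt10 (k n : ℕ) (hk : 3 ≤ k) (hn : 2 * k + 1 ≤ n) :
    ∀ i j : ℕ, 1 ≤ i → i ≤ n / 2 - k + 1 → 1 ≤ j → j ≤ n / 2 - k + 1 →
      i ≠ j → ¬ lep (Fset k n i) (Fset k n j) := by
  intro i j _ hi _ hj hne h
  exact hne (eq_of_lep_Fset (by omega) (by omega) hi hj h)
end

section
/- Let k ≥ 3, n ≥ 2k+1, and let A = A_n be the antichain with F_i = [i,i+1] ∪ [n−2k+4−i, n−i+1] for 1 ≤ i ≤ ⌊n/2⌋−k+1. For fixed i in this range, a set of the form [i, i+1] ∪ G belongs to the order ideal of F_{2k}^{[1,n]} generated by A but not to the order ideal generated by A − 1_{2k} if and only if G = H ∪ [n−i, n−i+1] with H ∈ F_{2k−4}^{[i+2, n−i−1]}, or G = H ∪ [n−i−1, n−i] with H ∈ F_{2k−4}^{[i+2, n−i−2]}. -/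
open Finset

/-! Every member of `F_{2k}` is `pairSet f = ⋃ⱼ {f j, f j + 1}` for a `PairSeparated` sequence
`f`, and its increasing listing is `f 0, f 0 + 1, f 1, f 1 + 1, …`; so `≤ₚ` between two such sets
is the pointwise order of their sequences. Each generator of the two ideals is a pair `[b, b + 1]`
followed by an interval starting at `c`, with sequence `b, c, c + 2, c + 4, …`, and a separated
sequence lies below such a progression as soon as its last term does. Hence if the top pair of
`[i, i + 1] ∪ G` starts at `t`, the set lies below `F_j` iff `i ≤ j` and `t ≤ n - j`, and below the
`j`-th member of `A − 1_{2k}` iff `i ≤ j - 1` and `t ≤ n - j - 1`. So it is a facet iff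
`t ≤ n - i` but not `t ≤ n - i - 2`. -/

def PairSeparated {k : ℕ} (f : Fin k → ℕ) : Prop :=
  ∀ j j' : Fin k, j < j' → f j + 2 ≤ f j'

def pairSet {k : ℕ} (f : Fin k → ℕ) : Finset ℕ :=
  Finset.univ.biUnion fun j : Fin k => {f j, f j + 1}

def pairList : {k : ℕ} → (Fin k → ℕ) → List ℕ
  | 0, _ => []
  | _ + 1, f => f 0 :: (f 0 + 1) :: pairList (Fin.tail f)

section pairSet

variable {k : ℕ}

theorem mem_pairSet {f : Fin k → ℕ} {x : ℕ} : x ∈ pairSet f ↔ ∃ j, x = f j ∨ x = f j + 1 := by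
  simp [pairSet]

theorem pairSet_cons (a : ℕ) (f : Fin k → ℕ) :
    pairSet (Fin.cons a f : Fin (k + 1) → ℕ) = Icc a (a + 1) ∪ pairSet f := by
  ext x
  simp only [mem_pairSet, Fin.exists_fin_succ, Fin.cons_zero, Fin.cons_succ, mem_union, mem_Icc]
  exact or_congr_left (by omega)

theorem pairSet_snoc (f : Fin k → ℕ) (a : ℕ) :
    pairSet (Fin.snoc f a : Fin (k + 1) → ℕ) = pairSet f ∪ Icc a (a + 1) := by
  ext x
  simp only [mem_pairSet, Fin.exists_fin_succ', Fin.snoc_castSucc, Fin.snoc_last, mem_union,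
    mem_Icc]
  exact or_congr_right (by omega)

theorem pairSet_two_mul_add (c : ℕ) :
    pairSet (fun s : Fin k => c + 2 * s) = Ico c (c + 2 * k) := by
  ext x
  simp only [mem_pairSet, mem_Ico]
  constructor
  · rintro ⟨j, rfl | rfl⟩ <;> omega
  · intro hx
    exact ⟨⟨(x - c) / 2, by omega⟩, by dsimp only; omega⟩

theorem Icc_union_inj {a b : ℕ} {X Y : Finset ℕ} (hX : ∀ x ∈ X, a + 2 ≤ x)
    (hY : ∀ y ∈ Y, b + 2 ≤ y) (h : Icc a (a + 1) ∪ X = Icc b (b + 1) ∪ Y) : a = b ∧ X = Y := by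
  have hmem : ∀ x, x ∈ Icc a (a + 1) ∪ X ↔ x ∈ Icc b (b + 1) ∪ Y := by simp [h]
  have hab : a = b := by
    have ha := (hmem a).1 (by simp)
    have hb := (hmem b).2 (by simp)
    simp only [mem_union, mem_Icc] at ha hb
    rcases ha with ha | ha
    · rcases hb with hb | hb
      · omega
      · have := hX b hb; omega
    · have := hY a ha
      rcases hb with hb | hb
      · omega
      · have := hX b hb; omega
  subst hab
  refine ⟨rfl, Finset.ext fun x => ⟨fun hx => ?_, fun hx => ?_⟩⟩
  · have := hX x hx
    simpa [show x ∉ Icc a (a + 1) by simp; omega] using (hmem x).1 (mem_union_right _ hx)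
  · have := hY x hx
    simpa [show x ∉ Icc a (a + 1) by simp; omega] using (hmem x).2 (mem_union_right _ hx)

end pairSet

section PairSeparated

variable {k : ℕ}

theorem pairSeparated_cons_iff {a : ℕ} {f : Fin k → ℕ} :
    PairSeparated (Fin.cons a f : Fin (k + 1) → ℕ) ↔ (∀ j, a + 2 ≤ f j) ∧ PairSeparated f := by
  simp only [PairSeparated, Fin.forall_fin_succ, Fin.cons_zero, Fin.cons_succ,
    Fin.succ_lt_succ_iff, Fin.succ_pos, Fin.not_lt_zero, forall_const,
    false_implies, true_and]

theorem pairSeparated_snoc_iff {a : ℕ} {f : Fin k → ℕ} :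
    PairSeparated (Fin.snoc f a : Fin (k + 1) → ℕ) ↔ PairSeparated f ∧ ∀ j, f j + 2 ≤ a := by
  have hlast : ∀ j : Fin k, ¬ Fin.last k < j.castSucc := fun j => not_lt.2 (Fin.le_last _)
  simp only [PairSeparated, Fin.forall_fin_succ', Fin.snoc_castSucc, Fin.snoc_last,
    Fin.castSucc_lt_castSucc_iff, Fin.castSucc_lt_last, hlast, lt_self_iff_false, forall_const,
    false_implies, implies_true, and_true, forall_and]

theorem PairSeparated.add_two_mul_le {f : Fin k → ℕ} (hf : PairSeparated f) {j j' : Fin k}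
    (h : j ≤ j') : f j + 2 * (j' - j : ℕ) ≤ f j' := by
  suffices ∀ d (j j' : Fin k), (j : ℕ) + d = j' → f j + 2 * d ≤ f j' from
    this _ j j' (by rw [Fin.le_def] at h; omega)
  intro d
  induction d with
  | zero => intro j j' h; obtain rfl : j = j' := Fin.ext (by omega); omega
  | succ d ih =>
    intro j j' h
    have hmid := ih j ⟨j + d, by omega⟩ rfl
    have hstep := hf ⟨j + d, by omega⟩ j' (by rw [Fin.lt_def]; dsimp only; omega)
    omega

theorem PairSeparated.add_two_le_of_mem_pairSet {a : ℕ} {f : Fin k → ℕ}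
    (hf : PairSeparated (Fin.cons a f : Fin (k + 1) → ℕ)) {x : ℕ} (hx : x ∈ pairSet f) :
    a + 2 ≤ x := by
  obtain ⟨j, hj⟩ := mem_pairSet.1 hx
  have := (pairSeparated_cons_iff.1 hf).1 j
  omega

end PairSeparated

section pairList

variable {k : ℕ}

theorem mem_pairList {f : Fin k → ℕ} {x : ℕ} : x ∈ pairList f ↔ x ∈ pairSet f := by
  induction k with
  | zero => simp [pairList, pairSet]
  | succ k ih =>
    conv_rhs => rw [← Fin.cons_self_tail f, pairSet_cons]
    simp only [pairList, List.mem_cons, ih, mem_union, mem_Icc, ← or_assoc]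
    exact or_congr_left (by omega)

theorem PairSeparated.pairwise_pairList {f : Fin k → ℕ} (hf : PairSeparated f) :
    (pairList f).Pairwise (· < ·) := by
  induction k with
  | zero => simp [pairList]
  | succ k ih =>
    replace hf : PairSeparated (Fin.cons (f 0) (Fin.tail f)) := by rwa [Fin.cons_self_tail]
    have htail : ∀ y ∈ pairList (Fin.tail f), f 0 + 2 ≤ y := fun y hy =>
      hf.add_two_le_of_mem_pairSet (mem_pairList.1 hy)
    simp only [pairList, List.pairwise_cons, List.mem_cons]
    refine ⟨?_, fun y hy => by have := htail y hy; omega, ih (pairSeparated_cons_iff.1 hf).2⟩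
    rintro y (rfl | hy)
    · omega
    · have := htail y hy; omega

theorem PairSeparated.sort_pairSet {f : Fin k → ℕ} (hf : PairSeparated f) :
    (pairSet f).sort (· ≤ ·) = pairList f := by
  have hs := hf.pairwise_pairList
  have hset : (pairList f).toFinset = pairSet f := by ext; simp [mem_pairList]
  rw [← hset]
  exact (List.toFinset_sort _ hs.nodup).2 (hs.imp le_of_lt)

theorem forall₂_pairList_iff {f g : Fin k → ℕ} :
    List.Forall₂ (· ≤ ·) (pairList f) (pairList g) ↔ ∀ j, f j ≤ g j := by
  induction k with
  | zero => simp [pairList]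
  | succ k ih =>
    simp only [pairList, List.forall₂_cons, ih, Fin.forall_fin_succ, Fin.tail,
      Nat.add_le_add_iff_right, and_self_left]

theorem lep_pairSet_iff {f g : Fin k → ℕ} (hf : PairSeparated f) (hg : PairSeparated g) :
    lep (pairSet f) (pairSet g) ↔ ∀ j, f j ≤ g j := by
  rw [lep, hf.sort_pairSet, hg.sort_pairSet, forall₂_pairList_iff]

end pairList

section Progression

variable {m : ℕ}

theorem PairSeparated.forall_le_two_mul_add_iff {f : Fin (m + 1) → ℕ} (hf : PairSeparated f)
    (c : ℕ) : (∀ s, f s ≤ c + 2 * s) ↔ f (Fin.last m) ≤ c + 2 * m := by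
  refine ⟨fun h => by simpa using h (Fin.last m), fun h s => ?_⟩
  have := hf.add_two_mul_le (Fin.le_last s)
  simp only [Fin.val_last] at this
  omega

theorem pairSeparated_cons_two_mul_add {b c : ℕ} (hbc : b + 2 ≤ c) :
    PairSeparated (Fin.cons b (fun s : Fin m => c + 2 * s) : Fin (m + 1) → ℕ) :=
  pairSeparated_cons_iff.2 ⟨fun _ => by omega, fun j j' h => by rw [Fin.lt_def] at h; dsimp only; omega⟩

theorem lep_Icc_union_Icc_iff {a b b' c d : ℕ} {g : Fin (m + 1) → ℕ}
    (hg : PairSeparated (Fin.cons a g : Fin (m + 2) → ℕ)) (hb' : b' = b + 1) (hbc : b + 2 ≤ c)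
    (hd : d + 1 = c + 2 * (m + 1)) :
    lep (Icc a (a + 1) ∪ pairSet g) (Icc b b' ∪ Icc c d) ↔ a ≤ b ∧ g (Fin.last m) ≤ c + 2 * m := by
  subst hb'
  have hcd : Icc c d = pairSet (fun s : Fin (m + 1) => c + 2 * s) := by
    rw [pairSet_two_mul_add, ← hd, Ico_add_one_right_eq_Icc]
  rw [hcd, ← pairSet_cons, ← pairSet_cons, lep_pairSet_iff hg (pairSeparated_cons_two_mul_add hbc),
    Fin.forall_fin_succ]
  simp only [Fin.cons_zero, Fin.cons_succ]
  rw [(pairSeparated_cons_iff.1 hg).2.forall_le_two_mul_add_iff]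

end Progression

section Facets

variable {m n i : ℕ} {g : Fin (m + 1) → ℕ}

theorem exists_lep_Aset_iff (hn : 2 * (m + 2) + 1 ≤ n) (hi1 : 1 ≤ i)
    (hi2 : i ≤ n / 2 - (m + 2) + 1) (hg : PairSeparated (Fin.cons i g : Fin (m + 2) → ℕ)) :
    (∃ T, Aset (m + 2) n T ∧ lep (Icc i (i + 1) ∪ pairSet g) T) ↔ g (Fin.last m) ≤ n - i := by
  constructor
  · rintro ⟨_, ⟨j, -, hj, rfl⟩, hlep⟩
    have := (lep_Icc_union_Icc_iff hg rfl (by omega) (by omega)).1 hlep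
    omega
  · intro h
    exact ⟨_, ⟨i, hi1, hi2, rfl⟩, (lep_Icc_union_Icc_iff hg rfl (by omega) (by omega)).2 (by omega)⟩

theorem exists_lep_AsetMinus_iff (hn : 2 * (m + 2) + 1 ≤ n) (hi1 : 1 ≤ i)
    (hg : PairSeparated (Fin.cons i g : Fin (m + 2) → ℕ)) :
    (∃ T, AsetMinus (m + 2) n T ∧ lep (Icc i (i + 1) ∪ pairSet g) T) ↔
      g (Fin.last m) + 2 ≤ n - i := by
  constructor
  · rintro ⟨_, ⟨j, hj2, hj, rfl⟩, hlep⟩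
    have := (lep_Icc_union_Icc_iff hg (by omega) (by omega) (by omega)).1 hlep
    omega
  · intro h
    have hspan := hg.add_two_mul_le (Fin.zero_le (Fin.last (m + 1)))
    simp only [Fin.cons_zero, Fin.cons_last, Fin.val_last, Fin.val_zero, Nat.sub_zero] at hspan
    exact ⟨_, ⟨i + 1, by omega, by omega, rfl⟩,
      (lep_Icc_union_Icc_iff hg (by omega) (by omega) (by omega)).2 (by omega)⟩

end Facets

section GaleEven

variable {m n i : ℕ} {G : Finset ℕ}

theorem galeEven_Icc_union_iff (hi1 : 1 ≤ i) (hG : ∀ x ∈ G, i + 2 ≤ x) :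
    GaleEven (m + 2) 1 n (Icc i (i + 1) ∪ G) ↔ ∃ g : Fin (m + 1) → ℕ,
      PairSeparated (Fin.cons i g : Fin (m + 2) → ℕ) ∧ g (Fin.last m) + 1 ≤ n ∧ G = pairSet g := by
  constructor
  · rintro ⟨f, hf, hb, hF⟩
    change _ = pairSet f at hF
    replace hf : PairSeparated (Fin.cons (f 0) (Fin.tail f)) := by rwa [Fin.cons_self_tail]
    rw [← Fin.cons_self_tail f, pairSet_cons] at hF
    obtain ⟨rfl, rfl⟩ := Icc_union_inj hG (fun x hx => hf.add_two_le_of_mem_pairSet hx) hF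
    exact ⟨Fin.tail f, hf, (hb (Fin.last _)).2, rfl⟩
  · rintro ⟨g, hg, hgn, rfl⟩
    obtain ⟨hlow, hsep⟩ := pairSeparated_cons_iff.1 hg
    refine ⟨Fin.cons i g, hg, Fin.forall_fin_succ.2 ⟨?_, fun j => ?_⟩, (pairSet_cons i g).symm⟩
    · have := hlow (Fin.last m)
      simp only [Fin.cons_zero]
      omega
    · have h1 := hlow j
      have h2 := hsep.add_two_mul_le (Fin.le_last j)
      simp only [Fin.cons_succ]
      omega

theorem exists_galeEven_union_Icc_iff {u t t' : ℕ} (hu : u + 1 = t) (ht' : t' = t + 1)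
    (hit : i + 2 ≤ t) :
    (∃ H, GaleEven m (i + 2) u H ∧ G = H ∪ Icc t t') ↔ ∃ g : Fin (m + 1) → ℕ,
      PairSeparated (Fin.cons i g : Fin (m + 2) → ℕ) ∧ g (Fin.last m) = t ∧ G = pairSet g := by
  subst ht'
  constructor
  · rintro ⟨_, ⟨h, hsep, hb, rfl⟩, rfl⟩
    refine ⟨Fin.snoc h t, pairSeparated_cons_iff.2 ⟨Fin.forall_fin_succ'.2 ⟨fun j => ?_, ?_⟩,
      pairSeparated_snoc_iff.2 ⟨hsep, fun j => ?_⟩⟩, Fin.snoc_last _ _, (pairSet_snoc h t).symm⟩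
    · simpa using (hb j).1
    · simpa using hit
    · have := hb j
      omega
  · rintro ⟨g, hg, rfl, rfl⟩
    rw [← Fin.snoc_init_self g, pairSeparated_cons_iff, pairSeparated_snoc_iff,
      Fin.forall_fin_succ'] at hg
    simp only [Fin.snoc_castSucc, Fin.snoc_last] at hg
    obtain ⟨⟨hlow, -⟩, hsep, hup⟩ := hg
    refine ⟨pairSet (Fin.init g), ⟨Fin.init g, hsep, fun j => ⟨hlow j, ?_⟩, rfl⟩, ?_⟩
    · have := hup j
      omega
    · rw [← pairSet_snoc, Fin.snoc_init_self]

end GaleEven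

theorem isBAFacet_Icc_union_pairSet_iff {m n i : ℕ} {g : Fin (m + 1) → ℕ}
    (hn : 2 * (m + 2) + 1 ≤ n) (hi1 : 1 ≤ i) (hi2 : i ≤ n / 2 - (m + 2) + 1)
    (hg : PairSeparated (Fin.cons i g : Fin (m + 2) → ℕ)) (hgn : g (Fin.last m) + 1 ≤ n) :
    IsBAFacet (m + 2) n (Icc i (i + 1) ∪ pairSet g) ↔
      g (Fin.last m) = n - i - 1 ∨ g (Fin.last m) = n - i := by
  have hgale := (galeEven_Icc_union_iff hi1 fun _ hx => hg.add_two_le_of_mem_pairSet hx).2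
    ⟨g, hg, hgn, rfl⟩
  simp only [IsBAFacet, InIdeal, hgale, true_and, exists_lep_Aset_iff hn hi1 hi2 hg,
    exists_lep_AsetMinus_iff hn hi1 hg]
  omega
/-- for `k ≥ 3`, `n ≥ 2k+1`, and `1 ≤ i ≤ ⌊n/2⌋−k+1`, a set of the
form `[i,i+1] ∪ G` belongs to the ideal generated by `A_n` but not to the ideal
generated by `A_n − 1_{2k}` (i.e. is a facet of `B_{A_n}`) if and only if
`G = H ∪ [n−i, n−i+1]` with `H ∈ F_{2k−4}^{[i+2, n−i−1]}`, or
`G = H ∪ [n−i−1, n−i]` with `H ∈ F_{2k−4}^{[i+2, n−i−2]}`. -/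
theorem stmt11 (k n i : ℕ) (hk : 3 ≤ k) (hn : 2 * k + 1 ≤ n)
    (hi1 : 1 ≤ i) (hi2 : i ≤ n / 2 - k + 1)
    (G : Finset ℕ) (hG : ∀ x ∈ G, i + 2 ≤ x ∧ x ≤ n) :
    (InIdeal k n (Aset k n) (Finset.Icc i (i + 1) ∪ G) ∧
      ¬ InIdeal k n (AsetMinus k n) (Finset.Icc i (i + 1) ∪ G)) ↔
    ((∃ H : Finset ℕ, GaleEven (k - 2) (i + 2) (n - i - 1) H ∧
        G = H ∪ Finset.Icc (n - i) (n - i + 1)) ∨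
     (∃ H : Finset ℕ, GaleEven (k - 2) (i + 2) (n - i - 2) H ∧
        G = H ∪ Finset.Icc (n - i - 1) (n - i))) := by
  obtain ⟨m, rfl⟩ : ∃ m, k = m + 2 := ⟨k - 2, by omega⟩
  have hG' : ∀ x ∈ G, i + 2 ≤ x := fun x hx => (hG x hx).1
  rw [Nat.add_sub_cancel,
    exists_galeEven_union_Icc_iff (u := n - i - 1) (t := n - i) (by omega) rfl (by omega),
    exists_galeEven_union_Icc_iff (u := n - i - 2) (t := n - i - 1) (by omega) (by omega)
      (by omega)]
  constructor
  · intro hF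
    obtain ⟨g, hg, hgn, rfl⟩ := (galeEven_Icc_union_iff hi1 hG').1 hF.1.1
    rcases (isBAFacet_Icc_union_pairSet_iff hn hi1 hi2 hg hgn).1 hF with hlast | hlast
    exacts [.inr ⟨g, hg, hlast, rfl⟩, .inl ⟨g, hg, hlast, rfl⟩]
  · rintro (⟨g, hg, hlast, rfl⟩ | ⟨g, hg, hlast, rfl⟩) <;>
      exact (isBAFacet_Icc_union_pairSet_iff hn hi1 hi2 hg (by omega)).2 (by omega)
end

section
/- Let k ≥ 3 and n ≥ 2k+1, with A = A_n as above. For each 1 ≤ i ≤ ⌊n/2⌋−k+1 and each H ∈ F_{2k−4}^{[i+2, n−i]}, the (2k−1)-set F = [i, i+1] ∪ H ∪ {n−i+1} is contained in exactly one facet of the relative squeezed ball B_A, namely F ∪ {m} where m is the maximum element of [i+2, n−i] \ H. Consequently F is a facet of the boundary sphere ∂B_A. -/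
/-!
Two combinatorial criteria do the work. The order `≤ₚ` is tested by counting: `F ≤ₚ G` iff
`|F| = |G|` and every initial segment `[0, t]` contains at least as many elements of `F` as of
`G`. A `2k`-subset of `[c, n]` lies in `F_{2k}^{[c,n]}` iff above the last element of each of its
maximal runs there is an even number of elements (Gale's evenness condition).

Let `m` be the largest gap of `H` in `[i+2, n−i]`. Then `H` contains all of `[m+1, n−i]`, an
interval of even length, so `F ∪ {m}` ends in the even block `[m, n−i+1]` and satisfies the
evenness condition; it is dominated by `F_i`, and by no member of `A − 1_{2k}` because it contains
both `i` and `n−i+1`. Conversely, every set `G` in the ideal of `A` has `min G + max G ≤ n+1`;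
for a facet `G = F ∪ {x}` this gives `x ≤ n−i+1`, `x > m` would put `x` in `H ⊆ F`, and `x < m`
would leave above the gap `m ∉ G` the interval `[m+1, n−i+1]` of odd length.
-/

open Finset

namespace List

variable {α : Type*} [LinearOrder α]

theorem Forall₂.countP_le_countP {a b : List α} (h : Forall₂ (· ≤ ·) a b) (t : α) :
    b.countP (· ≤ t) ≤ a.countP (· ≤ t) := by
  induction h with
  | nil => rfl
  | @cons x y _ _ hxy _ ih =>
    simp only [countP_cons, decide_eq_true_eq]
    by_cases hyt : y ≤ t
    · simp [hyt, hxy.trans hyt, ih]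
    · simp only [hyt, if_false]
      split_ifs <;> omega

theorem forall₂_le_of_countP_le_countP :
    ∀ {a b : List α}, a.Pairwise (· < ·) → b.Pairwise (· < ·) → a.length = b.length →
      (∀ t, b.countP (· ≤ t) ≤ a.countP (· ≤ t)) → Forall₂ (· ≤ ·) a b
  | [], [], _, _, _, _ => .nil
  | [], _ :: _, _, _, hlen, _ | _ :: _, [], _, _, hlen, _ => absurd hlen (by simp)
  | x :: a, y :: b, ha, hb, hlen, h => by
    rw [pairwise_cons] at ha hb
    have hxy : x ≤ y := by
      by_contra! hyx
      have ha0 : a.countP (· ≤ y) = 0 :=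
        countP_eq_zero.2 fun z hz => by simpa using hyx.trans (ha.1 z hz)
      simpa [countP_cons, ha0, hyx.not_ge] using h y
    refine .cons hxy
      (forall₂_le_of_countP_le_countP ha.2 hb.2 (by simpa using hlen) fun t => ?_)
    by_cases hyt : y ≤ t
    · simpa [countP_cons, hyt, hxy.trans hyt] using h t
    · rw [countP_eq_zero.2 fun z hz => by simpa using (not_le.1 hyt).trans (hb.1 z hz)]
      exact Nat.zero_le _

end List

theorem Finset.card_filter_eq_countP_sort {α : Type*} (r : α → α → Prop) [DecidableRel r]
    [IsTrans α r] [Std.Antisymm r] [Std.Total r] (s : Finset α) (p : α → Prop)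
    [DecidablePred p] :
    #(s.filter p) = (s.sort r).countP (fun x => decide (p x)) := by
  rw [← Multiset.coe_countP, sort_eq, Multiset.countP_eq_card_filter, ← filter_val, card_val]

theorem lep_iff_card_filter_le {F G : Finset ℕ} :
    lep F G ↔ #F = #G ∧ ∀ t, #(G.filter (· ≤ t)) ≤ #(F.filter (· ≤ t)) := by
  simp only [lep, card_filter_eq_countP_sort (· ≤ ·), ← length_sort (· ≤ ·) (s := F),
    ← length_sort (· ≤ ·) (s := G)]
  exact ⟨fun h => ⟨h.length_eq, h.countP_le_countP⟩, fun h =>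
    List.forall₂_le_of_countP_le_countP (sortedLT_sort F).pairwise (sortedLT_sort G).pairwise
      h.1 h.2⟩

namespace lep

variable {F G : Finset ℕ}

theorem le_of_forall_le (h : lep F G) {a y : ℕ} (ha : ∀ x ∈ F, a ≤ x) (hy : y ∈ G) :
    a ≤ y := by
  obtain ⟨x, hx⟩ : (F.filter (· ≤ y)).Nonempty := by
    rw [← card_pos]
    have hGy : 0 < #(G.filter (· ≤ y)) := card_pos.2 ⟨y, mem_filter.2 ⟨hy, le_rfl⟩⟩
    exact hGy.trans_le ((lep_iff_card_filter_le.1 h).2 y)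
  exact (ha x (mem_filter.1 hx).1).trans (mem_filter.1 hx).2

theorem le_of_forall_ge (h : lep F G) {b x : ℕ} (hb : ∀ y ∈ G, y ≤ b) (hx : x ∈ F) :
    x ≤ b := by
  obtain ⟨hcard, hle⟩ := lep_iff_card_filter_le.1 h
  have hF : #(F.filter (· ≤ b)) = #F :=
    (card_filter_le _ _).antisymm (hcard ▸ card_filter_eq_iff.2 hb ▸ hle b)
  exact card_filter_eq_iff.1 hF x hx

end lep

theorem lep_union_left {A F G : Finset ℕ} (hAF : Disjoint A F) (hAG : Disjoint A G)
    (h : lep F G) : lep (A ∪ F) (A ∪ G) := by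
  obtain ⟨hcard, hle⟩ := lep_iff_card_filter_le.1 h
  refine lep_iff_card_filter_le.2 ⟨by rw [card_union_of_disjoint hAF, card_union_of_disjoint hAG,
    hcard], fun t => ?_⟩
  rw [filter_union, filter_union, card_union_of_disjoint (disjoint_filter_filter hAF),
    card_union_of_disjoint (disjoint_filter_filter hAG)]
  exact Nat.add_le_add_left (hle t) _

theorem lep_Icc_of_forall_le {T : Finset ℕ} {a b : ℕ} (hT : ∀ x ∈ T, x ≤ b)
    (hcard : #T = b + 1 - a) : lep T (Icc a b) := by
  refine lep_iff_card_filter_le.2 ⟨by rw [hcard, Nat.card_Icc], fun t => ?_⟩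
  have hgt : #(T.filter (¬ · ≤ t)) ≤ #(Icc (t + 1) b) := by
    refine card_le_card fun x hx => ?_
    rw [mem_filter] at hx
    have := hT x hx.1
    rw [mem_Icc]
    omega
  have hIcc : (Icc a b).filter (· ≤ t) = Icc a (min b t) := by
    ext z
    simp only [mem_filter, mem_Icc]
    omega
  have := card_filter_add_card_filter_not (s := T) (· ≤ t)
  rw [Nat.card_Icc] at hgt
  rw [hIcc, Nat.card_Icc]
  omega

theorem card_biUnion_pair {k : ℕ} {f : Fin k → ℕ}
    (hf : ∀ j j' : Fin k, j < j' → f j + 2 ≤ f j') (J : Finset (Fin k)) :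
    #(J.biUnion fun j => ({f j, f j + 1} : Finset ℕ)) = 2 * #J := by
  rw [card_biUnion, sum_const_nat fun j _ => card_pair (by omega), mul_comm]
  intro a _ b _ hab
  have := (lt_or_gt_of_ne hab).imp (hf a b) (hf b a)
  simp only [disjoint_insert_left, disjoint_singleton_left, mem_insert, mem_singleton]
  omega

namespace GaleEven

variable {k c n : ℕ} {S : Finset ℕ}

theorem card_eq (h : GaleEven k c n S) : #S = 2 * k := by
  obtain ⟨f, hf, -, rfl⟩ := h
  rw [card_biUnion_pair hf, card_univ, Fintype.card_fin]

theorem subset_Icc (h : GaleEven k c n S) : S ⊆ Icc c n := by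
  obtain ⟨f, -, hbd, rfl⟩ := h
  intro x hx
  simp only [mem_biUnion, mem_univ, true_and, mem_insert, mem_singleton] at hx
  obtain ⟨j, hj⟩ := hx
  have := hbd j
  rw [mem_Icc]
  omega

theorem two_mul_le (h : GaleEven k c n S) : 2 * k ≤ n + 1 - c := by
  simpa [h.card_eq] using card_le_card h.subset_Icc

theorem even_card_filter_lt (h : GaleEven k c n S) {x : ℕ} (hx : x ∉ S ∨ x + 1 ∉ S) :
    Even #(S.filter (x < ·)) := by
  obtain ⟨f, hf, -, rfl⟩ := h
  -- no pair `{f j, f j + 1}` straddles `x`, so the elements above `x` form whole pairs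
  have : (univ.biUnion fun j => ({f j, f j + 1} : Finset ℕ)).filter (x < ·) =
      (univ.filter (x < f ·)).biUnion fun j => {f j, f j + 1} := by
    ext z
    simp only [mem_filter, mem_biUnion, mem_univ, true_and, mem_insert, mem_singleton] at hx ⊢
    constructor
    · rintro ⟨⟨j, hj⟩, hz⟩
      refine ⟨j, ?_, hj⟩
      by_contra! hjx
      exact hx.elim (fun h => h ⟨j, by omega⟩) fun h => h ⟨j, by omega⟩
    · rintro ⟨j, hj, hz⟩
      exact ⟨⟨j, hz⟩, by omega⟩
  rw [this, card_biUnion_pair hf]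
  exact even_two_mul _

theorem insert_pair {a : ℕ} (hca : c ≤ a) (han : a + 1 ≤ n) (h : GaleEven k (a + 2) n S) :
    GaleEven (k + 1) c n (insert a (insert (a + 1) S)) := by
  obtain ⟨f, hf, hbd, rfl⟩ := h
  refine ⟨Fin.cons a f, ?_, ?_, ?_⟩
  · intro j j' hjj'
    induction j using Fin.cases <;> induction j' using Fin.cases
    · exact absurd hjj' (lt_irrefl _)
    · exact (hbd _).1
    · exact absurd hjj' (Fin.not_lt_zero _)
    · exact hf _ _ (Fin.succ_lt_succ_iff.1 hjj')
  · refine Fin.cases ⟨hca, han⟩ fun j => ?_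
    have := hbd j
    simp only [Fin.cons_succ]
    omega
  · ext z
    simp [Fin.exists_fin_succ, or_assoc]

end GaleEven

theorem galeEven_of_even_card_filter_lt {k c n : ℕ} {S : Finset ℕ} (hcard : #S = 2 * k)
    (hS : S ⊆ Icc c n) (hpar : ∀ x ∈ S, x + 1 ∉ S → Even #(S.filter (x < ·))) :
    GaleEven k c n S := by
  induction k generalizing c S with
  | zero =>
    rw [card_eq_zero.1 hcard]
    exact ⟨Fin.elim0, fun j => j.elim0, fun j => j.elim0, by simp⟩
  | succ k ih =>
    have hne : S.Nonempty := card_pos.1 (by omega)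
    set a := S.min' hne
    have ha : a ∈ S := S.min'_mem hne
    have hmin : ∀ z ∈ S, a ≤ z := fun z hz => S.min'_le z hz
    have ha1 : a + 1 ∈ S := by
      by_contra ha1
      have hodd := hpar a ha ha1
      rw [show S.filter (a < ·) = S.erase a by
        ext z; simp only [mem_filter, mem_erase]
        exact ⟨fun h => ⟨h.2.ne', h.1⟩, fun h => ⟨h.2, lt_of_le_of_ne (hmin z h.2) h.1.symm⟩⟩,
        card_erase_of_mem ha, hcard, Nat.even_iff] at hodd
      omega
    set S' := S.filter (a + 1 < ·)
    have hS' : insert a (insert (a + 1) S') = S := by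
      ext z
      simp only [S', mem_insert, mem_filter]
      have := hmin z
      constructor
      · rintro (rfl | rfl | h)
        exacts [ha, ha1, h.1]
      · intro hz
        rcases lt_or_ge (a + 1) z with h | h
        · exact Or.inr (Or.inr ⟨hz, h⟩)
        · have := this hz; omega
    have hS'S : S' ⊆ S := filter_subset _ _
    have ha_S' : a ∉ S' := by simp [S']
    have ha1_S' : a + 1 ∉ S' := by simp [S']
    rw [← hS']
    refine GaleEven.insert_pair (mem_Icc.1 (hS ha)).1 (mem_Icc.1 (hS ha1)).2 (ih ?_ ?_ ?_)
    · rw [← hS', card_insert_of_notMem (by simp [ha_S']), card_insert_of_notMem ha1_S'] at hcard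
      omega
    · intro z hz
      have := hS (hS'S hz)
      simp only [S', mem_filter, mem_Icc] at hz this ⊢
      omega
    · intro x hx hx1
      have hx' := (mem_filter.1 hx).2
      rw [filter_filter,
        filter_congr fun z _ => and_iff_right_of_imp (fun h : x < z => by omega)]
      exact hpar x (hS'S hx) fun h => hx1 (mem_filter.2 ⟨h, by omega⟩)

namespace InIdeal

variable {k n a b : ℕ} {G : Finset ℕ}

theorem add_le_of_Aset (hG : InIdeal k n (Aset k n) G) (ha : ∀ z ∈ G, a ≤ z)
    (hb : b ∈ G) : a + b ≤ n + 1 := by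
  have hkn : 2 * k ≤ n := by simpa using hG.1.two_mul_le
  have hk : 0 < 2 * k := hG.1.card_eq ▸ card_pos.2 ⟨b, hb⟩
  obtain ⟨-, _, ⟨j, -, hj, rfl⟩, hlep⟩ := hG
  have haj : a ≤ j := hlep.le_of_forall_le ha (by simp [Fset])
  have hbj : b ≤ n - j + 1 :=
    hlep.le_of_forall_ge (fun y hy => by simp [Fset] at hy; omega) hb
  omega

theorem add_lt_of_AsetMinus (hG : InIdeal k n (AsetMinus k n) G)
    (ha : ∀ z ∈ G, a ≤ z) (hb : b ∈ G) : a + b < n := by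
  have hkn : 2 * k ≤ n := by simpa using hG.1.two_mul_le
  have hk : 0 < 2 * k := hG.1.card_eq ▸ card_pos.2 ⟨b, hb⟩
  obtain ⟨-, _, ⟨j, hj2, hj, rfl⟩, hlep⟩ := hG
  have haj : a ≤ j - 1 := hlep.le_of_forall_le ha (by simp)
  have hbj : b ≤ n - j := hlep.le_of_forall_ge (fun y hy => by simp at hy; omega) hb
  omega

end InIdeal

theorem filter_lt_eq_Icc_of_forall_sdiff_le {H : Finset ℕ} {a b m : ℕ} (hH : H ⊆ Icc a b)
    (ham : a ≤ m) (hmax : ∀ x ∈ Icc a b \ H, x ≤ m) : H.filter (m < ·) = Icc (m + 1) b := by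
  ext z
  simp only [mem_filter, mem_Icc]
  constructor
  · rintro ⟨hz, hmz⟩
    have := mem_Icc.1 (hH hz)
    omega
  · rintro ⟨h1, h2⟩
    refine ⟨by_contra fun hz => ?_, by omega⟩
    have := hmax z (mem_sdiff.2 ⟨mem_Icc.2 ⟨by omega, h2⟩, hz⟩)
    omega

def ridge (n i : ℕ) (H : Finset ℕ) : Finset ℕ := Icc i (i + 1) ∪ H ∪ {n - i + 1}

section Ridge

variable {k n i m : ℕ} {H : Finset ℕ}

@[simp]
theorem mem_ridge {z : ℕ} : z ∈ ridge n i H ↔ z = i ∨ z = i + 1 ∨ z ∈ H ∨ z = n - i + 1 := by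
  have : z ∈ Icc i (i + 1) ↔ z = i ∨ z = i + 1 := by rw [mem_Icc]; omega
  simp only [ridge, mem_union, mem_singleton, this, or_assoc]

theorem ridge_subset_Icc (hH : H ⊆ Icc (i + 2) (n - i)) (hn : 2 * i < n) :
    ridge n i H ⊆ Icc i (n - i + 1) := by
  intro z hz
  rw [mem_ridge] at hz
  rw [mem_Icc]
  rcases hz with rfl | rfl | hz | rfl
  · omega
  · omega
  · have := mem_Icc.1 (hH hz); omega
  · omega

theorem card_ridge (hH : H ⊆ Icc (i + 2) (n - i)) (hn : 2 * i < n) :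
    #(ridge n i H) = #H + 3 := by
  have hiH : Disjoint (Icc i (i + 1)) H :=
    disjoint_left.2 fun z hz hzH => by have := mem_Icc.1 (hH hzH); rw [mem_Icc] at hz; omega
  have htop : n - i + 1 ∉ Icc i (i + 1) ∪ H := by
    rw [mem_union, mem_Icc]
    exact fun h => h.elim (by omega) fun h => by have := mem_Icc.1 (hH h); omega
  rw [ridge, card_union_of_disjoint (disjoint_singleton_right.2 htop),
    card_union_of_disjoint hiH, Nat.card_Icc, card_singleton]
  omega

theorem ridge_filter_lt (hH : H ⊆ Icc (i + 2) (n - i)) (hm : m ∈ Icc (i + 2) (n - i) \ H)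
    (hmax : ∀ x ∈ Icc (i + 2) (n - i) \ H, x ≤ m) :
    (ridge n i H).filter (m < ·) = Icc (m + 1) (n - i + 1) := by
  have hmI := mem_Icc.1 (mem_sdiff.1 hm).1
  have htop := filter_lt_eq_Icc_of_forall_sdiff_le hH hmI.1 hmax
  ext z
  have hz := congrArg (z ∈ ·) htop
  by_cases hzH : z ∈ H <;> simp [hzH] at hz ⊢ <;> omega

theorem even_sub_of_forall_sdiff_le (hH : GaleEven (k - 2) (i + 2) (n - i) H)
    (hm : m ∈ Icc (i + 2) (n - i) \ H) (hmax : ∀ x ∈ Icc (i + 2) (n - i) \ H, x ≤ m) :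
    Even (n - i - m) := by
  have := hH.even_card_filter_lt (Or.inl (mem_sdiff.1 hm).2)
  rwa [filter_lt_eq_Icc_of_forall_sdiff_le hH.subset_Icc (mem_Icc.1 (mem_sdiff.1 hm).1).1 hmax,
    Nat.card_Icc, Nat.add_sub_add_right] at this

theorem ridge_union_subset_Icc (hH : H ⊆ Icc (i + 2) (n - i))
    (hm : m ∈ Icc (i + 2) (n - i) \ H) :
    ridge n i H ∪ {m} ⊆ Icc i (n - i + 1) := by
  have hmI := mem_Icc.1 (mem_sdiff.1 hm).1
  exact union_subset (ridge_subset_Icc hH (by omega)) (by simp; omega)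

theorem card_ridge_union (hk : 2 ≤ k) (hH : GaleEven (k - 2) (i + 2) (n - i) H)
    (hm : m ∈ Icc (i + 2) (n - i) \ H) : #(ridge n i H ∪ {m}) = 2 * k := by
  obtain ⟨hmI, hmH⟩ := mem_sdiff.1 hm
  rw [mem_Icc] at hmI
  have hmr : m ∉ ridge n i H := by simp only [mem_ridge, hmH, false_or]; omega
  rw [card_union_of_disjoint (disjoint_singleton_right.2 hmr),
    card_ridge hH.subset_Icc (by omega), hH.card_eq, card_singleton]
  omega

theorem galeEven_ridge_union (hk : 2 ≤ k) (hi : 1 ≤ i)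
    (hH : GaleEven (k - 2) (i + 2) (n - i) H)
    (hm : m ∈ Icc (i + 2) (n - i) \ H) (hmax : ∀ x ∈ Icc (i + 2) (n - i) \ H, x ≤ m) :
    GaleEven k 1 n (ridge n i H ∪ {m}) := by
  obtain ⟨hmI, hmH⟩ := mem_sdiff.1 hm
  rw [mem_Icc] at hmI
  have hHI := hH.subset_Icc
  have hS := ridge_union_subset_Icc hHI hm
  refine galeEven_of_even_card_filter_lt (card_ridge_union hk hH hm)
    (hS.trans (Icc_subset_Icc hi (by omega))) fun x hx hx1 => ?_
  have hxI := mem_Icc.1 (hS hx)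
  rcases lt_or_ge x m with hxm | hmx
  · have hxi : i + 1 ≤ x := by
      refine hxI.1.lt_of_ne fun hxi => hx1 ?_
      simp [← hxi]
    have hfilter : (ridge n i H ∪ {m}).filter (x < ·) =
        insert m (insert (n - i + 1) (H.filter (x < ·))) := by
      ext z
      by_cases hzH : z ∈ H
      · have := mem_Icc.1 (hHI hzH)
        have : z ≠ m := fun h => hmH (h ▸ hzH)
        simp [hzH]
        omega
      · simp [hzH]
        omega
    have hHx := hH.even_card_filter_lt (x := x) (Or.inr fun h => hx1 (by simp [h]))
    rw [hfilter, card_insert_of_notMem (by simp [hmH]; omega),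
      card_insert_of_notMem (by simp; intro h; have := mem_Icc.1 (hHI h); omega)]
    exact hHx.add even_two
  · -- from `m` on, the set is the interval `[m, n - i + 1]`
    have hxtop : x = n - i + 1 := by
      by_contra hxtop
      have hx1H : x + 1 ∈ H ∨ x + 1 = n - i + 1 := by
        by_cases hxn : x + 1 = n - i + 1
        · exact Or.inr hxn
        · refine Or.inl (by_contra fun h => ?_)
          have := hmax (x + 1) (mem_sdiff.2 ⟨mem_Icc.2 ⟨by omega, by omega⟩, h⟩)
          omega
      exact hx1 (by rcases hx1H with h | h <;> simp [h])
    rw [hxtop, filter_false_of_mem fun z hz => not_lt.2 (mem_Icc.1 (hS hz)).2, card_empty]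
    exact Even.zero

theorem lep_ridge_union_Fset (hk : 2 ≤ k) (hi : 1 ≤ i)
    (hH : GaleEven (k - 2) (i + 2) (n - i) H)
    (hm : m ∈ Icc (i + 2) (n - i) \ H) : lep (ridge n i H ∪ {m}) (Fset k n i) := by
  obtain ⟨hmI, hmH⟩ := mem_sdiff.1 hm
  have hHI := hH.subset_Icc
  -- `H` and `m` fit into `[i + 2, n - i]`, so `n + 2 ≥ 2 * k + 2 * i`
  have hroom : #H + 1 ≤ #(Icc (i + 2) (n - i)) := by
    rw [← card_insert_of_notMem hmH]
    exact card_le_card (insert_subset hmI hHI)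
  rw [hH.card_eq, Nat.card_Icc] at hroom
  set T := H ∪ ({n - i + 1} ∪ {m})
  have hT : ∀ x ∈ T, i + 2 ≤ x ∧ x ≤ n - i + 1 := by
    intro x hx
    have := mem_Icc.1 hmI
    simp only [T, mem_union, mem_singleton] at hx
    rcases hx with hx | rfl | rfl
    · have := mem_Icc.1 (hHI hx); omega
    all_goals omega
  have hiT : Disjoint (Icc i (i + 1)) T :=
    disjoint_left.2 fun z hz hzT => by have := hT z hzT; rw [mem_Icc] at hz; omega
  have hST : ridge n i H ∪ {m} = Icc i (i + 1) ∪ T := by rw [ridge, union_assoc, union_assoc]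
  have hTcard := card_ridge_union hk hH hm
  rw [hST, card_union_of_disjoint hiT, Nat.card_Icc] at hTcard
  rw [hST, Fset]
  refine lep_union_left hiT ?_ (lep_Icc_of_forall_le (fun x hx => (hT x hx).2) (by omega))
  exact disjoint_left.2 fun z hz hz' => by rw [mem_Icc] at hz hz'; omega

theorem eq_ridge_union_of_subset (hk : 2 ≤ k) (hH : GaleEven (k - 2) (i + 2) (n - i) H)
    (hm : m ∈ Icc (i + 2) (n - i) \ H) (hmax : ∀ x ∈ Icc (i + 2) (n - i) \ H, x ≤ m)
    {G : Finset ℕ} (hG : InIdeal k n (Aset k n) G) (hsub : ridge n i H ⊆ G) :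
    G = ridge n i H ∪ {m} := by
  obtain ⟨hmI, hmH⟩ := mem_sdiff.1 hm
  rw [mem_Icc] at hmI
  have hHI := hH.subset_Icc
  have hr := ridge_subset_Icc hHI (by omega)
  obtain ⟨x, hx, rfl⟩ := exists_eq_insert_iff.2 ⟨hsub, by
    rw [hG.1.card_eq, card_ridge hHI (by omega), hH.card_eq]; omega⟩
  suffices x = m by rw [this, insert_eq, union_comm]
  have hxtop : x ≠ n - i + 1 := fun h => hx (by simp [h])
  have hxn : x ≤ n - i + 1 := by
    by_contra! hxn
    have := hG.add_le_of_Aset (a := i) (fun z hz => ?_) (mem_insert_self x _)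
    · omega
    · rcases mem_insert.1 hz with rfl | hz
      exacts [by omega, (mem_Icc.1 (hr hz)).1]
  rcases lt_trichotomy x m with hxm | rfl | hmx
  · -- then the elements of `G` above `m ∉ G` form the odd-length interval `[m + 1, n - i + 1]`
    have hpar := hG.1.even_card_filter_lt (x := m) (Or.inl (by simp [hmH]; omega))
    rw [filter_insert, if_neg hxm.not_gt, ridge_filter_lt hHI hm hmax, Nat.card_Icc] at hpar
    have := even_sub_of_forall_sdiff_le hH hm hmax
    rw [Nat.even_iff] at hpar this
    omega
  · rfl
  · refine absurd (mem_ridge.2 (Or.inr (Or.inr (Or.inl (by_contra fun hxH => ?_))))) hx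
    have := hmax x (mem_sdiff.2 ⟨mem_Icc.2 ⟨by omega, by omega⟩, hxH⟩)
    omega

end Ridge

theorem stmt12_general (k n i : ℕ) (hk : 3 ≤ k)
    (hi1 : 1 ≤ i) (hi2 : i ≤ n / 2 - k + 1)
    (H : Finset ℕ) (hH : GaleEven (k - 2) (i + 2) (n - i) H)
    (m : ℕ) (hm : m ∈ Finset.Icc (i + 2) (n - i) \ H)
    (hmax : ∀ x ∈ Finset.Icc (i + 2) (n - i) \ H, x ≤ m) :
    IsBAFacet k n ((Finset.Icc i (i + 1) ∪ H ∪ {n - i + 1}) ∪ {m}) ∧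
    ∀ G : Finset ℕ, IsBAFacet k n G →
      (Finset.Icc i (i + 1) ∪ H ∪ {n - i + 1}) ⊆ G →
      G = (Finset.Icc i (i + 1) ∪ H ∪ {n - i + 1}) ∪ {m} := by
  have hk2 : 2 ≤ k := by omega
  have hS := ridge_union_subset_Icc hH.subset_Icc hm
  refine ⟨⟨⟨galeEven_ridge_union hk2 hi1 hH hm hmax, Fset k n i, ⟨i, hi1, hi2, rfl⟩,
    lep_ridge_union_Fset hk2 hi1 hH hm⟩, fun hA' => ?_⟩,
    fun G hG hsub => eq_ridge_union_of_subset hk2 hH hm hmax hG.1 hsub⟩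
  have := hA'.add_lt_of_AsetMinus (fun z hz => (mem_Icc.1 (hS hz)).1)
    (by simp : n - i + 1 ∈ ridge n i H ∪ {m})
  have := mem_Icc.1 (mem_sdiff.1 hm).1
  omega

/-- for `k ≥ 3`, `n ≥ 2k+1`, `1 ≤ i ≤ ⌊n/2⌋−k+1`, and
`H ∈ F_{2k−4}^{[i+2, n−i]}`, the `(2k−1)`-set `F = [i,i+1] ∪ H ∪ {n−i+1}` is
contained in exactly one facet of the relative squeezed ball `B_{A_n}`, namely
`F ∪ {m}` where `m = max([i+2, n−i] \\ H)`; consequently `F` is a facet of the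
boundary sphere `∂B_{A_n}`. -/
theorem stmt12 (k n i : ℕ) (hk : 3 ≤ k) (hn : 2 * k + 1 ≤ n)
    (hi1 : 1 ≤ i) (hi2 : i ≤ n / 2 - k + 1)
    (H : Finset ℕ) (hH : GaleEven (k - 2) (i + 2) (n - i) H)
    (m : ℕ) (hm : m ∈ Finset.Icc (i + 2) (n - i) \ H)
    (hmax : ∀ x ∈ Finset.Icc (i + 2) (n - i) \ H, x ≤ m) :
    IsBAFacet k n ((Finset.Icc i (i + 1) ∪ H ∪ {n - i + 1}) ∪ {m}) ∧
    ∀ G : Finset ℕ, IsBAFacet k n G →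
      (Finset.Icc i (i + 1) ∪ H ∪ {n - i + 1}) ⊆ G →
      G = (Finset.Icc i (i + 1) ∪ H ∪ {n - i + 1}) ∪ {m} :=
  stmt12_general k n i hk hi1 hi2 H hH m hm hmax
end

section
/- Fix k ≥ 2 and n, and consider the collection A_i of 3-element subsets of [1,n] given by A_i = ∪_{j=1}^{i−1} { {j, j+1, n−j+1}, {j, j+1, n−j−1}, {j+1, n−j, n−j+1}, {j, n−j−1, n−j} }. Then any transversal T̃ of A_i (contained in [1,i] ∪ [n−i, n], with 2i < n − C for suitable constant C) satisfies |T̃| ≥ (2/5)·(2i) − O(1); more precisely |T̃| ≥ (4i − 10)/5. -/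
/-!
Put the vertices on a ladder whose `j`-th rung joins `j` and `n - j`; the four triples of
`TripleFam n i` at index `j` only involve rungs `j - 1`, `j`, `j + 1`. A finite check shows that
a set meeting the triples at the four indices `m, …, m + 3` contains at least 4 of the 10
vertices of rungs `m, …, m + 4`. Peeling off blocks of five rungs from the top thus gives 4
vertices per 5 rungs, and for the at most 4 rungs left at the bottom (if there are at least 3)
the two disjoint triples `{1, n - 1, n - 2}` and `{2, 3, n - 3}` give 2 more vertices.
-/

open Finset

/-- The family `𝒜_i` of 3-element subsets of `[1,n]`:
`𝒜_i = ⋃_{j=1}^{i−1} { {j, j+1, n−j+1}, {j, j+1, n−j−1},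
{j+1, n−j, n−j+1}, {j, n−j−1, n−j} }`. -/
def TripleFam (n i : ℕ) : Finset ℕ → Prop := fun F =>
  ∃ j : ℕ, 1 ≤ j ∧ j < i ∧
    (F = {j, j + 1, n - j + 1} ∨ F = {j, j + 1, n - j - 1} ∨
     F = {j + 1, n - j, n - j + 1} ∨ F = {j, n - j - 1, n - j})

/-- The four triples at index `j`, with `a₀, a₁` standing for `j, j + 1 ∈ T` and
`b₀, b₁, b₂` for `n - (j - 1), n - j, n - (j + 1) ∈ T`. -/
def rung (a₀ a₁ b₀ b₁ b₂ : Bool) : Bool :=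
  (a₀ || a₁ || b₀) && (a₀ || a₁ || b₂) && (a₁ || b₁ || b₀) && (a₀ || b₂ || b₁)

def LadderCovers (l r : ℕ → Bool) (i : ℕ) : Prop :=
  ∀ j, 1 ≤ j → j < i → rung (l j) (l (j + 1)) (r (j - 1)) (r j) (r (j + 1))

def ladderCount (l r : ℕ → Bool) (s : Finset ℕ) : ℕ :=
  #{j ∈ s | l j} + #{j ∈ s | r j}

section Ladder

variable {l r : ℕ → Bool}

lemma ladderCount_union {s t : Finset ℕ} (h : Disjoint s t) :
    ladderCount l r (s ∪ t) = ladderCount l r s + ladderCount l r t := by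
  simp only [ladderCount, filter_union, card_union_of_disjoint (disjoint_filter_filter h)]
  ring

lemma ladderCount_Ico_eq_sum_range (m k : ℕ) : ladderCount l r (Ico m (m + k)) =
    ∑ x ∈ range k, ((if l (m + x) then 1 else 0) + if r (m + x) then 1 else 0) := by
  rw [ladderCount, card_filter, card_filter, ← sum_add_distrib, sum_Ico_eq_sum_range,
    Nat.add_sub_cancel_left]

lemma LadderCovers.mono {i i' : ℕ} (h : LadderCovers l r i) (hi : i' ≤ i) :
    LadderCovers l r i' := fun j hj hji => h j hj (hji.trans_le hi)

lemma four_le_ladderCount_block {m : ℕ} (h : ∀ j, m ≤ j → j < m + 4 →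
    rung (l j) (l (j + 1)) (r (j - 1)) (r j) (r (j + 1))) :
    4 ≤ ladderCount l r (Ico m (m + 5)) := by
  have hcheck : ∀ c a₀ a₁ a₂ a₃ a₄ b₀ b₁ b₂ b₃ b₄ : Bool, rung a₀ a₁ c b₀ b₁ →
      rung a₁ a₂ b₀ b₁ b₂ → rung a₂ a₃ b₁ b₂ b₃ → rung a₃ a₄ b₂ b₃ b₄ →
      4 ≤ ((if a₀ then 1 else 0) + if b₀ then 1 else 0) + ((if a₁ then 1 else 0) +
        if b₁ then 1 else 0) + ((if a₂ then 1 else 0) + if b₂ then 1 else 0) +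
        ((if a₃ then 1 else 0) + if b₃ then 1 else 0) + ((if a₄ then 1 else 0) +
        if b₄ then 1 else 0) := by
    decide
  rw [ladderCount_Ico_eq_sum_range]
  simp only [sum_range_succ, sum_range_zero, zero_add, add_zero]
  exact hcheck (r (m - 1)) (l m) (l (m + 1)) (l (m + 2)) (l (m + 3)) (l (m + 4)) (r m) (r (m + 1))
    (r (m + 2)) (r (m + 3)) (r (m + 4)) (h m le_rfl (by omega)) (h (m + 1) (by omega) (by omega))
    (h (m + 2) (by omega) (by omega)) (h (m + 3) (by omega) (by omega))

lemma ladderCount_mono {s t : Finset ℕ} (h : s ⊆ t) : ladderCount l r s ≤ ladderCount l r t :=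
  add_le_add (card_le_card (filter_subset_filter _ h)) (card_le_card (filter_subset_filter _ h))

lemma two_le_ladderCount_Ico_one_four (h : LadderCovers l r 3) :
    2 ≤ ladderCount l r (Ico 1 4) := by
  have hcheck : ∀ c a₁ a₂ a₃ b₁ b₂ b₃ : Bool, rung a₁ a₂ c b₁ b₂ → rung a₂ a₃ b₁ b₂ b₃ →
      2 ≤ ((if a₁ then 1 else 0) + if b₁ then 1 else 0) + ((if a₂ then 1 else 0) +
        if b₂ then 1 else 0) + ((if a₃ then 1 else 0) + if b₃ then 1 else 0) := by
    decide
  rw [ladderCount_Ico_eq_sum_range 1 3]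
  simp only [sum_range_succ, sum_range_zero, zero_add]
  exact hcheck (r 0) (l 1) (l 2) (l 3) (r 1) (r 2) (r 3) (h 1 le_rfl (by omega))
    (h 2 (by omega) (by omega))

theorem LadderCovers.four_mul_le {i : ℕ} (h : LadderCovers l r i) :
    4 * i ≤ 5 * ladderCount l r (Ico 1 (i + 1)) + 10 := by
  induction i using Nat.strong_induction_on with
  | _ i ih =>
    rcases lt_or_ge i 5 with hi | hi
    · rcases lt_or_ge i 3 with hi3 | hi3
      · omega
      have h2 := (two_le_ladderCount_Ico_one_four (h.mono hi3)).trans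
        (ladderCount_mono (Ico_subset_Ico_right (by omega : 4 ≤ i + 1)))
      omega
    obtain ⟨k, rfl⟩ : ∃ k, i = k + 5 := ⟨i - 5, by omega⟩
    have hsplit : Ico 1 (k + 5 + 1) = Ico 1 (k + 1) ∪ Ico (k + 1) (k + 1 + 5) :=
      (Ico_union_Ico_eq_Ico (by omega) (by omega)).symm
    have hlow := ih k (by omega) (h.mono (by omega))
    have hblock := four_le_ladderCount_block (m := k + 1) fun j hj hjm => h j (by omega) (by omega)
    rw [hsplit, ladderCount_union (Ico_disjoint_Ico_consecutive _ _ _)]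
    omega

end Ladder

lemma ladderCount_le_card {T : Finset ℕ} {n i : ℕ} (hn : 2 * i < n) :
    ladderCount (fun j => j ∈ T) (fun j => n - j ∈ T) (Ico 1 (i + 1)) ≤ #T := by
  rw [ladderCount, ← card_disjSum]
  refine card_le_card_of_injOn (Sum.elim id (n - ·)) ?_ ?_
  · rintro (x | x) hx <;> simp at hx ⊢ <;> tauto
  · rintro (x | x) hx (y | y) hy hxy <;> simp at hx hy hxy ⊢ <;> omega

lemma ladderCovers_of_transversal {T : Finset ℕ} {n i : ℕ} (hn : i ≤ n)
    (htrans : ∀ F : Finset ℕ, TripleFam n i F → (T ∩ F).Nonempty) :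
    LadderCovers (fun j => j ∈ T) (fun j => n - j ∈ T) i := by
  have hit {a b c : ℕ} (hF : TripleFam n i {a, b, c}) : a ∈ T ∨ b ∈ T ∨ c ∈ T := by
    obtain ⟨x, hx⟩ := htrans _ hF
    simp only [mem_inter, mem_insert, mem_singleton] at hx
    rcases hx with ⟨hxT, rfl | rfl | rfl⟩ <;> tauto
  intro j hj hji
  simp only [rung, Bool.and_eq_true, Bool.or_eq_true, decide_eq_true_eq, or_assoc]
  rw [show n - (j - 1) = n - j + 1 by omega, show n - (j + 1) = n - j - 1 by omega]
  exact ⟨⟨⟨hit ⟨j, hj, hji, Or.inl rfl⟩, hit ⟨j, hj, hji, Or.inr (Or.inl rfl)⟩⟩,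
    hit ⟨j, hj, hji, Or.inr (Or.inr (Or.inl rfl))⟩⟩,
    hit ⟨j, hj, hji, Or.inr (Or.inr (Or.inr rfl))⟩⟩

theorem stmt13_general (n i : ℕ) (hn : 2 * i + 2 < n)
    (T : Finset ℕ)
    (htrans : ∀ F : Finset ℕ, TripleFam n i F → (T ∩ F).Nonempty) :
    (4 * (i : ℚ) - 10) / 5 ≤ (T.card : ℚ) := by
  have hladder := (ladderCovers_of_transversal (by omega) htrans).four_mul_le
  have hcard := ladderCount_le_card (T := T) (by omega : 2 * i < n)
  have h : (4 * i : ℚ) ≤ 5 * #T + 10 := by exact_mod_cast (by omega : 4 * i ≤ 5 * #T + 10)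
  rw [div_le_iff₀ (by norm_num)]
  linarith

/-- any transversal `T̃ ⊆ [1,i] ∪ [n−i, n]` of the family `𝒜_i`
(with `n > 2i + 2`) satisfies `|T̃| ≥ (2/5)·(2i) − O(1)`; more precisely
`|T̃| ≥ (4i − 10)/5`. -/
theorem stmt13 (k n i : ℕ) (hk : 2 ≤ k) (hn : 2 * i + 2 < n)
    (T : Finset ℕ) (hT : T ⊆ Finset.Icc 1 i ∪ Finset.Icc (n - i) n)
    (htrans : ∀ F : Finset ℕ, TripleFam n i F → (T ∩ F).Nonempty) :
    (4 * (i : ℚ) - 10) / 5 ≤ (T.card : ℚ) :=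
  stmt13_general n i hn T htrans
end

section
/- For the cs simplicial 3-sphere Δ³_n on vertex set {±1,...,±n} (from the Jockusch/Novik–Zheng construction), the set T = ({±1, ±3, ±5, ...} ∩ V_n) ∪ {±n} is a transversal of the hypergraph of facets of Δ³_n, where the facets of Δ³_n are exactly the sets of the forms: {i, i+1, j, j+1}, {i, i+1, −j, −(j+1)} (appropriately signed 4-sets per the complete facet list of Corollary 3.2 of Novik–Zheng). Consequently τ(H(Δ³_n)) ≤ n + O(1) and lim_{n→∞} μ(Δ³_n) ≤ 1/2. -/
/-!
Among two consecutive integers one is odd, so every facet containing a pair `{j, j + 1}` or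
`{-j, -(j + 1)}` meets the vertices of odd absolute value; the remaining facets contain `±n`.
The odd integers in `[-n, n]` are the `2 ⌈n/2⌉` numbers `2k + 1 - 2 ⌈n/2⌉`, `k < 2 ⌈n/2⌉`;
when `n` is odd they already contain `±n`.
-/

open Finset

noncomputable def oddVertices (n : ℕ) : Finset ℤ :=
  ((Icc (-(n : ℤ)) n).erase 0).filter (fun v => Odd |v|)

lemma mem_oddVertices {n : ℕ} {x : ℤ} : x ∈ oddVertices n ↔ Odd x ∧ |x| ≤ n := by
  simp only [oddVertices, mem_filter, mem_erase, mem_Icc, odd_abs, abs_le]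
  constructor
  · rintro ⟨⟨-, hx⟩, hodd⟩
    exact ⟨hodd, hx⟩
  · rintro ⟨hodd, hx⟩
    exact ⟨⟨fun h => by simp [h] at hodd, hx⟩, hodd⟩

lemma oddVertices_eq_image (n : ℕ) :
    oddVertices n =
      (range (2 * ((n + 1) / 2))).image (fun k : ℕ => 2 * (k : ℤ) + 1 - 2 * ((n + 1) / 2 : ℕ)) := by
  ext x
  simp only [mem_oddVertices, mem_image, mem_range, abs_le, Int.odd_iff]
  constructor
  · rintro ⟨hodd, hlo, hhi⟩
    exact ⟨((x - 1) / 2 + (n + 1) / 2 : ℤ).toNat, by omega, by omega⟩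
  · rintro ⟨k, hk, rfl⟩
    omega

lemma card_oddVertices (n : ℕ) : (oddVertices n).card = 2 * ((n + 1) / 2) := by
  rw [oddVertices_eq_image, card_image_of_injective _ (fun a b h => by simpa using h), card_range]

lemma card_oddVertices_union_le (n : ℕ) : (oddVertices n ∪ {(n : ℤ), -(n : ℤ)}).card ≤ n + 2 := by
  rcases Nat.even_or_odd n with ⟨m, rfl⟩ | hodd
  · calc _ ≤ (oddVertices (m + m)).card + 2 :=
          (card_union_le _ _).trans (Nat.add_le_add_left card_le_two _)
      _ = m + m + 2 := by rw [card_oddVertices]; omega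
  · have hpm : ({(n : ℤ), -(n : ℤ)} : Finset ℤ) ⊆ oddVertices n := by
      have hn : Odd (n : ℤ) := by exact_mod_cast hodd
      intro x hx
      simp only [mem_insert, mem_singleton] at hx
      rcases hx with rfl | rfl <;> simp [mem_oddVertices, hn]
    rw [union_eq_left.mpr hpm, card_oddVertices]
    obtain ⟨m, rfl⟩ := hodd
    omega

lemma Int.odd_or_odd_add_one (j : ℤ) : Odd j ∨ Odd (j + 1) :=
  (Int.even_or_odd j).elim (fun h => Or.inr h.add_one) Or.inl

lemma oddVertices_inter_nonempty_of_pair_subset {n : ℕ} {F : Finset ℤ} {a b : ℤ}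
    (hab : {a, b} ⊆ F) (hodd : Odd a ∨ Odd b) (ha : |a| ≤ n) (hb : |b| ≤ n) :
    (oddVertices n ∩ F).Nonempty := by
  rcases hodd with hodd | hodd
  · exact ⟨a, mem_inter.mpr ⟨mem_oddVertices.mpr ⟨hodd, ha⟩, hab (by simp)⟩⟩
  · exact ⟨b, mem_inter.mpr ⟨mem_oddVertices.mpr ⟨hodd, hb⟩, hab (by simp)⟩⟩

theorem stmt18_general (n : ℕ) (Facets : Finset (Finset ℤ))
    (hfacets : ∀ F ∈ Facets,
      F ⊆ (Finset.Icc (-(n : ℤ)) (n : ℤ)).erase 0 ∧ F.card = 4 ∧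
      ((∃ j : ℤ, 1 ≤ j ∧ j + 1 ≤ (n : ℤ) ∧
          (({j, j + 1} : Finset ℤ) ⊆ F ∨ ({-j, -(j + 1)} : Finset ℤ) ⊆ F)) ∨
        (n : ℤ) ∈ F ∨ -(n : ℤ) ∈ F)) :
    (∀ F ∈ Facets,
      ((((Finset.Icc (-(n : ℤ)) (n : ℤ)).erase 0).filter (fun v => Odd |v|)
          ∪ {(n : ℤ), -(n : ℤ)}) ∩ F).Nonempty) ∧
    (((Finset.Icc (-(n : ℤ)) (n : ℤ)).erase 0).filter (fun v => Odd |v|)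
        ∪ {(n : ℤ), -(n : ℤ)}).card ≤ n + 2 := by
  refine ⟨fun F hF => ?_, card_oddVertices_union_le n⟩
  obtain ⟨-, -, ⟨j, hj, hjn, hpair⟩ | hn | hn⟩ := hfacets F hF
  · have hodd := Int.odd_or_odd_add_one j
    suffices (oddVertices n ∩ F).Nonempty from this.mono (inter_subset_inter_right subset_union_left)
    rcases hpair with hpair | hpair
    · exact oddVertices_inter_nonempty_of_pair_subset hpair hodd
        (abs_le.mpr ⟨by omega, by omega⟩) (abs_le.mpr ⟨by omega, by omega⟩)
    · exact oddVertices_inter_nonempty_of_pair_subset hpair (hodd.imp Odd.neg Odd.neg)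
        (abs_le.mpr ⟨by omega, by omega⟩) (abs_le.mpr ⟨by omega, by omega⟩)
  · exact ⟨n, mem_inter.mpr ⟨by simp, hn⟩⟩
  · exact ⟨-n, mem_inter.mpr ⟨by simp, hn⟩⟩

/-- let `Facets` be the set of facets of the cs simplicial
3-sphere `Δ³_n` on the vertex set `V_n = {±1, …, ±n}`. Per the complete facet
list (Corollary 3.2 of Novik–Zheng), every facet is a 4-subset of `V_n`
containing a pair of consecutive integers `{j, j+1}` or `{−j, −(j+1)}`
(`1 ≤ j < n`), or containing `n` or `−n`. Then
`T = ({±1, ±3, ±5, …} ∩ V_n) ∪ {±n}` is a transversal of the hypergraph of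
facets of `Δ³_n`, and `|T| ≤ n + 2`, so `τ(H(Δ³_n)) ≤ n + O(1)` and
`lim_{n→∞} μ(Δ³_n) ≤ 1/2`. -/
theorem stmt18 (n : ℕ) (hn : 2 ≤ n) (Facets : Finset (Finset ℤ))
    (hfacets : ∀ F ∈ Facets,
      F ⊆ (Finset.Icc (-(n : ℤ)) (n : ℤ)).erase 0 ∧ F.card = 4 ∧
      ((∃ j : ℤ, 1 ≤ j ∧ j + 1 ≤ (n : ℤ) ∧
          (({j, j + 1} : Finset ℤ) ⊆ F ∨ ({-j, -(j + 1)} : Finset ℤ) ⊆ F)) ∨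
        (n : ℤ) ∈ F ∨ -(n : ℤ) ∈ F)) :
    (∀ F ∈ Facets,
      ((((Finset.Icc (-(n : ℤ)) (n : ℤ)).erase 0).filter (fun v => Odd |v|)
          ∪ {(n : ℤ), -(n : ℤ)}) ∩ F).Nonempty) ∧
    (((Finset.Icc (-(n : ℤ)) (n : ℤ)).erase 0).filter (fun v => Odd |v|)
        ∪ {(n : ℤ), -(n : ℤ)}).card ≤ n + 2 :=
  stmt18_general n Facets hfacets
end
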